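/- Let k ≥ 3 and let M₀ = [[α,β,0],[γ,δ,0],[e,f,0]] ∈ M₃⁰(ℤ/2^kℤ) satisfy A(M₀) = B(M₀) = C(M₀) = 0 in ℤ/2^kℤ. If γ or δ is odd (a unit in ℤ/2^kℤ), then η(M₀, k, K)/(8192·64^{K−3}) → 0 as K → ∞. -/
import Mathlib


open Filter

/-- `ord2 K t`: the largest `j ≤ K` such that `t` is divisible by `2^j` in `ℤ/2^Kℤ`
(so `ord2 K 0 = K`). -/
noncomputable def ord2 (K : ℕ) (t : ZMod (2 ^ K)) : ℕ :=
  sSup {j : ℕ | j ≤ K ∧ (2 : ZMod (2 ^ K)) ^ j ∣ t}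

/-- For `M = [[α,β,0],[γ,δ,0],[e,f,0]]`, `Af M = γf - δe`. -/
def Af {n : ℕ} (M : Matrix (Fin 3) (Fin 3) (ZMod n)) : ZMod n :=
  M 1 0 * M 2 1 - M 1 1 * M 2 0

/-- For `M = [[α,β,0],[γ,δ,0],[e,f,0]]`, `Bf M = αf - βe`. -/
def Bf {n : ℕ} (M : Matrix (Fin 3) (Fin 3) (ZMod n)) : ZMod n :=
  M 0 0 * M 2 1 - M 0 1 * M 2 0

/-- For `M = [[α,β,0],[γ,δ,0],[e,f,0]]`, `Cf M = αδ - βγ`. -/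
def Cf {n : ℕ} (M : Matrix (Fin 3) (Fin 3) (ZMod n)) : ZMod n :=
  M 0 0 * M 1 1 - M 0 1 * M 1 0

/-- `eta r K M₀` is the number of `3 × 3` matrices `M` over `ℤ/2^Kℤ` with third column zero,
reducing to `M₀` mod `2^r`, with `ord₂(A(M)) > ord₂(B(M))` and `ord₂(C(M)) > ord₂(B(M))`. -/
noncomputable def eta (r K : ℕ) (M₀ : Matrix (Fin 3) (Fin 3) (ZMod (2 ^ r))) : ℕ :=
  Nat.card {M : Matrix (Fin 3) (Fin 3) (ZMod (2 ^ K)) //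
    (∀ i, M i 2 = 0) ∧
    (∀ i j, (((M i j).val : ZMod (2 ^ r))) = M₀ i j) ∧
    ord2 K (Bf M) < ord2 K (Af M) ∧ ord2 K (Bf M) < ord2 K (Cf M)}

lemma ord2_spec (K : ℕ) (t : ZMod (2 ^ K)) :
    ord2 K t ≤ K ∧ (2 : ZMod (2 ^ K)) ^ (ord2 K t) ∣ t := by
  have hne : Set.Nonempty {j : ℕ | j ≤ K ∧ (2 : ZMod (2 ^ K)) ^ j ∣ t} :=
    ⟨0, Nat.zero_le K, by simp⟩
  have hbdd : BddAbove {j : ℕ | j ≤ K ∧ (2 : ZMod (2 ^ K)) ^ j ∣ t} :=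
    ⟨K, fun j hj => hj.1⟩
  exact Nat.sSup_mem hne hbdd

lemma le_ord2 {K j : ℕ} {t : ZMod (2 ^ K)} (h1 : j ≤ K)
    (h2 : (2 : ZMod (2 ^ K)) ^ j ∣ t) : j ≤ ord2 K t :=
  le_csSup ⟨K, fun _ hj => hj.1⟩ ⟨h1, h2⟩

lemma unit_lift {k K : ℕ} (hk : 1 ≤ k) {x : ZMod (2 ^ K)} {y : ZMod (2 ^ k)}
    (h : ((x.val : ℕ) : ZMod (2 ^ k)) = y) (hy : IsUnit y) : IsUnit x := by
  haveI : NeZero (2 ^ k) := ⟨by positivity⟩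
  haveI : NeZero (2 ^ K) := ⟨by positivity⟩
  rw [← h, ZMod.isUnit_iff_coprime] at hy
  have h2 : Nat.Coprime x.val 2 := (Nat.coprime_pow_right_iff hk x.val 2).mp hy
  have h3 : Nat.Coprime x.val (2 ^ K) := Nat.Coprime.pow_right K h2
  have := (ZMod.isUnit_iff_coprime x.val (2 ^ K)).mpr h3
  rwa [ZMod.natCast_val, ZMod.cast_id] at this

lemma eta_eq_zero (k K : ℕ) (hk : 1 ≤ k) (M₀ : Matrix (Fin 3) (Fin 3) (ZMod (2 ^ k)))
    (hodd : IsUnit (M₀ 1 0) ∨ IsUnit (M₀ 1 1)) : eta k K M₀ = 0 := by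
  have hE : IsEmpty {M : Matrix (Fin 3) (Fin 3) (ZMod (2 ^ K)) //
      (∀ i, M i 2 = 0) ∧
      (∀ i j, (((M i j).val : ZMod (2 ^ k))) = M₀ i j) ∧
      ord2 K (Bf M) < ord2 K (Af M) ∧ ord2 K (Bf M) < ord2 K (Cf M)} := by
    constructor
    rintro ⟨M, _, hr, h1, h2⟩
    set m := ord2 K (Bf M) + 1 with hm
    have hAspec := ord2_spec K (Af M)
    have hCspec := ord2_spec K (Cf M)
    have hmK : m ≤ K := le_trans h1 hAspec.1
    have hdA : (2 : ZMod (2 ^ K)) ^ m ∣ Af M :=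
      dvd_trans (pow_dvd_pow 2 h1) hAspec.2
    have hdC : (2 : ZMod (2 ^ K)) ^ m ∣ Cf M :=
      dvd_trans (pow_dvd_pow 2 h2) hCspec.2
    have hdB : (2 : ZMod (2 ^ K)) ^ m ∣ Bf M := by
      rcases hodd with hu | hu
      · have hunit : IsUnit (M 1 0) := unit_lift hk (hr 1 0) hu
        have id1 : M 1 0 * Bf M = M 0 0 * Af M + M 2 0 * Cf M := by
          simp only [Af, Bf, Cf]; ring
        have hd : (2 : ZMod (2 ^ K)) ^ m ∣ M 1 0 * Bf M := by
          rw [id1]; exact dvd_add (hdA.mul_left _) (hdC.mul_left _)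
        rcases isUnit_iff_exists_inv.mp hunit with ⟨v, hv⟩
        have hB : Bf M = v * (M 1 0 * Bf M) := by
          rw [← mul_assoc, mul_comm v, hv, one_mul]
        rw [hB]; exact hd.mul_left v
      · have hunit : IsUnit (M 1 1) := unit_lift hk (hr 1 1) hu
        have id1 : M 1 1 * Bf M = M 0 1 * Af M + M 2 1 * Cf M := by
          simp only [Af, Bf, Cf]; ring
        have hd : (2 : ZMod (2 ^ K)) ^ m ∣ M 1 1 * Bf M := by
          rw [id1]; exact dvd_add (hdA.mul_left _) (hdC.mul_left _)
        rcases isUnit_iff_exists_inv.mp hunit with ⟨v, hv⟩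
        have hB : Bf M = v * (M 1 1 * Bf M) := by
          rw [← mul_assoc, mul_comm v, hv, one_mul]
        rw [hB]; exact hd.mul_left v
    have := le_ord2 hmK hdB
    omega
  rw [eta]
  exact Nat.card_of_isEmpty

theorem density_zero_of_gamma_or_delta_odd (k : ℕ) (hk : 3 ≤ k)
    (M₀ : Matrix (Fin 3) (Fin 3) (ZMod (2 ^ k)))
    (hcol : ∀ i, M₀ i 2 = 0)
    (hA : Af M₀ = 0) (hB : Bf M₀ = 0) (hC : Cf M₀ = 0)
    (hodd : IsUnit (M₀ 1 0) ∨ IsUnit (M₀ 1 1)) :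
    Tendsto (fun K : ℕ => (eta k K M₀ : ℝ) / (8192 * 64 ^ (K - 3))) atTop (nhds 0) := by
  have h0 : ∀ K, eta k K M₀ = 0 := fun K => eta_eq_zero k K (by omega) M₀ hodd
  simp only [h0, Nat.cast_zero, zero_div]
  exact tendsto_const_nhds
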